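/- Cardinality bound for inexact bulk chasing: Let ζ ∈ [0, 1/2), ω₁ ∈ (0,1), and β ∈ (0, ‖B‖^{−1/2}) be such that ω̂ := (ω₁(1−ζ)+ζ)/(1−2ζ) ≤ κ(B)^{−1/2}(1 − ‖B‖β²)^{1/2}. Let w ∈ H, let Λ₀ ⊆ 𝒥 be finite with supp w ⊆ Λ₀, and let r ∈ H satisfy ‖r − (B w − f)‖ ≤ ζ‖B w − f‖. Then for every finite set Λ̄ ⊆ 𝒥 for which there exists v ∈ H with supp v ⊆ Λ̄ and ‖u − v‖ ≤ β‖u − w‖_B, the set Λ̂ := Λ₀ ∪ Λ̄ satisfies ‖r|_{Λ̂}‖ ≥ ω₁‖r‖ and #(Λ̂ \ Λ₀) ≤ #Λ̄. -/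

import Mathlib

open scoped RealInnerProductSpace

open Classical in
/-- Coordinatewise restriction of an element of `ℓ²(𝒥)` to a subset `Λ ⊆ 𝒥`
(entries outside `Λ` set to zero). -/
noncomputable def restr {J : Type*} (Λ : Set J) (v : lp (fun _ : J => ℝ) 2) :
    lp (fun _ : J => ℝ) 2 :=
  ⟨fun i => if i ∈ Λ then v i else 0, by
    have hv : Memℓp (fun i => v i) 2 := lp.memℓp v
    have : Memℓp (fun i => if i ∈ Λ then v i else 0) 2 := by
      rw [memℓp_gen_iff (by norm_num)] at hv ⊢
      refine Summable.of_nonneg_of_le (fun i => ?_) (fun i => ?_) hv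
      · positivity
      · by_cases h : i ∈ Λ <;> simp [h] <;> positivity
    exact this⟩

/-!
Write `q = B w - f = B (w - u)` for the residual and `z = w - v = (w - u) + (u - v)`, which is
supported in `Λ̂`, so `|⟨q, z⟩| = |⟨q|_{Λ̂}, z⟩| ≤ ‖q|_{Λ̂}‖ ‖z‖`. In the energy inner product
`u - v` is small against `w - u` (`‖u - v‖_B² ≤ ‖B‖ β² ‖w - u‖_B²`), so the energy cosine of the
angle between `z` and `w - u` is at least `(1 - ‖B‖ β²)^{1/2}`, i.e.
`⟨q, z⟩ ≥ (1 - ‖B‖ β²)^{1/2} ‖w - u‖_B ‖z‖_B`. Passing from energy to Euclidean norms,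
`‖q‖ ≤ ‖B‖^{1/2} ‖w - u‖_B` and `‖z‖ ≤ ‖B⁻¹‖^{1/2} ‖z‖_B`, costs the factor `κ(B)^{1/2}`, whence
`‖q|_{Λ̂}‖ ≥ κ(B)^{-1/2} (1 - ‖B‖ β²)^{1/2} ‖q‖ ≥ ω̂ ‖q‖`. The perturbation `‖r - q‖ ≤ ζ ‖q‖`
then lowers `ω̂` to `ω₁`.
-/

/-- The gap between the two sides is `(t + s A)² + (1 - s) A (s A - C)`. -/
theorem one_sub_mul_mul_le_sq {A t C s : ℝ} (hs : s ≤ 1) (hA : 0 ≤ A) (hC : C ≤ s * A) :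
    (1 - s) * (A * (A + 2 * t + C)) ≤ (A + t) ^ 2 := by
  nlinarith [sq_nonneg (t + s * A), mul_nonneg (mul_nonneg (sub_nonneg.2 hs) hA)
    (sub_nonneg.2 hC)]

theorem mul_sq_lt_one_of_lt_inv_sqrt {n β : ℝ} (hn : 0 ≤ n) (hβ0 : 0 ≤ β)
    (hβ : β < (√n)⁻¹) : n * β ^ 2 < 1 := by
  have hsqrt : 0 < √n := inv_pos.mp (hβ0.trans_lt hβ)
  have hlt : β * √n < 1 := by
    simpa [inv_mul_cancel₀ hsqrt.ne'] using mul_lt_mul_of_pos_right hβ hsqrt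
  calc n * β ^ 2 = (β * √n) ^ 2 := by rw [mul_pow, Real.sq_sqrt hn]; ring
    _ < 1 := pow_lt_one₀ (by positivity) hlt two_ne_zero

theorem inv_sqrt_mul_sqrt_mul_le {κ c x N : ℝ} (hκ : 0 ≤ κ) (hx : 0 ≤ x) (hN : 0 ≤ N)
    (h : c * x ^ 2 ≤ κ * N ^ 2) : (√κ)⁻¹ * √c * x ≤ N := by
  have hsqrt : (√κ)⁻¹ * √c * x = √(c * x ^ 2 / κ) := by
    rw [Real.sqrt_div' _ hκ, Real.sqrt_mul' _ (sq_nonneg x), Real.sqrt_sq hx]; ring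
  rw [hsqrt, Real.sqrt_le_left hN]
  exact div_le_of_le_mul₀ hκ (sq_nonneg N) (by linarith)

theorem le_of_sq_le_mul {y c : ℝ} (hc : 0 ≤ c) (h : y ^ 2 ≤ c * y) : y ≤ c := by
  nlinarith

section PositiveOperator

variable {E : Type*} [NormedAddCommGroup E] [InnerProductSpace ℝ E]

theorem ContinuousLinearMap.real_inner_apply_self_le (T : E →L[ℝ] E) (x : E) :
    ⟪T x, x⟫ ≤ ‖T‖ * ‖x‖ ^ 2 :=
  calc ⟪T x, x⟫ ≤ ‖T x‖ * ‖x‖ := real_inner_le_norm _ _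
    _ ≤ ‖T‖ * ‖x‖ * ‖x‖ := by gcongr; exact T.le_opNorm x
    _ = ‖T‖ * ‖x‖ ^ 2 := by ring

namespace ContinuousLinearMap.IsPositive

variable {T : E →L[ℝ] E}

theorem real_inner_sq_le (hT : T.IsPositive) (x y : E) : ⟪T x, y⟫ ^ 2 ≤ ⟪T x, x⟫ * ⟪T y, y⟫ := by
  have hcs := LinearMap.BilinForm.apply_mul_apply_le_of_forall_zero_le
    ((innerₗ E).comp T.toLinearMap) hT.inner_nonneg_left x y
  have hsymm : ⟪T y, x⟫ = ⟪T x, y⟫ := by rw [hT.inner_left_eq_inner_right, real_inner_comm]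
  simpa [sq, hsymm] using hcs

theorem norm_apply_sq_le (hT : T.IsPositive) (x : E) : ‖T x‖ ^ 2 ≤ ‖T‖ * ⟪T x, x⟫ := by
  have hcs := hT.real_inner_sq_le x (T x)
  rw [real_inner_self_eq_norm_sq] at hcs
  refine le_of_sq_le_mul (mul_nonneg (norm_nonneg T) (hT.inner_nonneg_left x)) ?_
  calc (‖T x‖ ^ 2) ^ 2 ≤ ⟪T x, x⟫ * ⟪T (T x), T x⟫ := hcs
    _ ≤ ⟪T x, x⟫ * (‖T‖ * ‖T x‖ ^ 2) := by
      gcongr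
      exacts [hT.inner_nonneg_left x, T.real_inner_apply_self_le (T x)]
    _ = ‖T‖ * ⟪T x, x⟫ * ‖T x‖ ^ 2 := by ring

theorem norm_sq_le_of_rightInverse (hT : T.IsPositive) {S : E →L[ℝ] E}
    (hS : ∀ x, T (S x) = x) (x : E) :
    ‖x‖ ^ 2 ≤ ‖S‖ * ⟪T x, x⟫ := by
  have hcs := hT.real_inner_sq_le (S x) x
  rw [hS, real_inner_self_eq_norm_sq, real_inner_comm] at hcs
  refine le_of_sq_le_mul (mul_nonneg (norm_nonneg S) (hT.inner_nonneg_left x)) ?_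
  calc (‖x‖ ^ 2) ^ 2 ≤ ⟪S x, x⟫ * ⟪T x, x⟫ := hcs
    _ ≤ ‖S‖ * ‖x‖ ^ 2 * ⟪T x, x⟫ := by
      gcongr
      exacts [hT.inner_nonneg_left x, S.real_inner_apply_self_le x]
    _ = ‖S‖ * ⟪T x, x⟫ * ‖x‖ ^ 2 := by ring

theorem one_sub_mul_norm_apply_sq_le (hT : T.IsPositive) {S : E →L[ℝ] E}
    (hS : ∀ x, T (S x) = x) {a b : E} {s N : ℝ} (hs : s < 1) (hb : ⟪T b, b⟫ ≤ s * ⟪T a, a⟫)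
    (hN : |⟪T a, a + b⟫| ≤ N * ‖a + b‖) :
    (1 - s) * ‖T a‖ ^ 2 ≤ ‖T‖ * ‖S‖ * N ^ 2 := by
  have hA := hT.inner_nonneg_left a
  have hTa := hT.norm_apply_sq_le a
  have hTz : ⟪T (a + b), a + b⟫ = ⟪T a, a⟫ + 2 * ⟪T a, b⟫ + ⟪T b, b⟫ := by
    rw [map_add, inner_add_left, inner_add_right, inner_add_right,
      hT.inner_left_eq_inner_right b a, real_inner_comm (T a) b]
    ring
  rcases eq_or_ne (a + b) 0 with hz | hz
  · have hba : b = -a := eq_neg_of_add_eq_zero_right hz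
    rw [hba, map_neg, inner_neg_neg] at hb
    have hA0 : ⟪T a, a⟫ = 0 := by nlinarith
    rw [hA0, mul_zero] at hTa
    rw [le_antisymm hTa (sq_nonneg _), mul_zero]
    positivity
  · have hzpos : 0 < ‖a + b‖ ^ 2 := by positivity
    have hangle := one_sub_mul_mul_le_sq (t := ⟪T a, b⟫) hs.le hA hb
    have hnz := hT.norm_sq_le_of_rightInverse hS (a + b)
    have hsq : ⟪T a, a + b⟫ ^ 2 ≤ N ^ 2 * ‖a + b‖ ^ 2 := by
      rw [← sq_abs, ← mul_pow]
      exact pow_le_pow_left₀ (abs_nonneg _) hN 2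
    rw [inner_add_right] at hsq
    rw [hTz] at hnz
    refine le_of_mul_le_mul_right ?_ hzpos
    calc (1 - s) * ‖T a‖ ^ 2 * ‖a + b‖ ^ 2
        ≤ (1 - s) * ((‖T‖ * ⟪T a, a⟫) * (‖S‖ * (⟪T a, a⟫ + 2 * ⟪T a, b⟫ + ⟪T b, b⟫))) := by
          rw [mul_assoc]
          exact mul_le_mul_of_nonneg_left
            (mul_le_mul hTa hnz (sq_nonneg _) (mul_nonneg (norm_nonneg T) hA)) (by linarith)
      _ = ‖T‖ * ‖S‖ * ((1 - s) * (⟪T a, a⟫ * (⟪T a, a⟫ + 2 * ⟪T a, b⟫ + ⟪T b, b⟫))) := by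
          ring
      _ ≤ ‖T‖ * ‖S‖ * (N ^ 2 * ‖a + b‖ ^ 2) :=
          mul_le_mul_of_nonneg_left (hangle.trans hsq) (by positivity)
      _ = ‖T‖ * ‖S‖ * N ^ 2 * ‖a + b‖ ^ 2 := by ring

end ContinuousLinearMap.IsPositive

end PositiveOperator

section Restriction

variable {J : Type*}

open Classical in
theorem restr_apply (Λ : Set J) (v : lp (fun _ : J => ℝ) 2) (i : J) :
    restr Λ v i = if i ∈ Λ then v i else 0 := rfl

theorem restr_sub (Λ : Set J) (x y : lp (fun _ : J => ℝ) 2) :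
    restr Λ (x - y) = restr Λ x - restr Λ y := by
  ext i
  simp only [restr_apply, lp.coeFn_sub, Pi.sub_apply]
  split_ifs <;> simp

theorem inner_restr_of_support_subset {Λ : Set J} (q : lp (fun _ : J => ℝ) 2)
    {z : lp (fun _ : J => ℝ) 2} (hz : ∀ i ∉ Λ, z i = 0) : ⟪restr Λ q, z⟫ = ⟪q, z⟫ := by
  rw [lp.inner_eq_tsum, lp.inner_eq_tsum]
  refine tsum_congr fun i => ?_
  by_cases h : i ∈ Λ <;> simp [restr_apply, h, hz]

theorem norm_restr_le (Λ : Set J) (x : lp (fun _ : J => ℝ) 2) : ‖restr Λ x‖ ≤ ‖x‖ := by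
  have h : ‖restr Λ x‖ ^ 2 = ⟪x, restr Λ x⟫ := by
    rw [← inner_restr_of_support_subset (Λ := Λ) x (fun i hi => by simp [restr_apply, hi]),
      real_inner_self_eq_norm_sq]
  nlinarith [real_inner_le_norm x (restr Λ x), norm_nonneg (restr Λ x), norm_nonneg x]

theorem mul_norm_le_norm_restr_of_norm_sub_le {Λ : Set J} {q r : lp (fun _ : J => ℝ) 2}
    {ζ ω ω₁ : ℝ} (hζ : ζ < 1 / 2) (hω₁ : 0 ≤ ω₁)
    (hω : (ω₁ * (1 - ζ) + ζ) / (1 - 2 * ζ) ≤ ω) (hq : ω * ‖q‖ ≤ ‖restr Λ q‖)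
    (hr : ‖r - q‖ ≤ ζ * ‖q‖) : ω₁ * ‖r‖ ≤ ‖restr Λ r‖ := by
  have hζω : ω₁ * (1 + ζ) + ζ ≤ ω := by
    refine le_trans ?_ hω
    rw [le_div_iff₀ (by linarith)]
    nlinarith [sq_nonneg ζ, mul_nonneg hω₁ (sq_nonneg ζ)]
  have hrq : ‖r‖ ≤ (1 + ζ) * ‖q‖ := by
    linarith [norm_le_norm_add_norm_sub' r q]
  have hqr : ‖restr Λ q‖ ≤ ‖restr Λ r‖ + ζ * ‖q‖ := by
    have := norm_le_norm_add_norm_sub' (restr Λ q) (restr Λ r)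
    rw [← restr_sub] at this
    linarith [norm_restr_le Λ (q - r), norm_sub_rev q r]
  nlinarith [mul_le_mul_of_nonneg_left hrq hω₁, mul_le_mul_of_nonneg_right hζω (norm_nonneg q)]

end Restriction

theorem stmt_18_general {J : Type*} [DecidableEq J]
    (B Binv : lp (fun _ : J => ℝ) 2 →L[ℝ] lp (fun _ : J => ℝ) 2)
    (rB RB : ℝ) (hrB : 0 < rB)
    (hsa : ∀ x y, ⟪B x, y⟫ = ⟪x, B y⟫)
    (hell : ∀ v, rB * ‖v‖ ^ 2 ≤ ⟪B v, v⟫ ∧ ⟪B v, v⟫ ≤ RB * ‖v‖ ^ 2)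
    (hinv2 : B.comp Binv = ContinuousLinearMap.id ℝ _)
    (f u : lp (fun _ : J => ℝ) 2) (hu : B u = f)
    (ζ ω₁ β : ℝ) (hζ : ζ < 1 / 2)
    (hω₁0 : 0 < ω₁)
    (hβ0 : 0 < β) (hβ : β < (Real.sqrt ‖B‖)⁻¹)
    (hωhat : (ω₁ * (1 - ζ) + ζ) / (1 - 2 * ζ) ≤
      (Real.sqrt (‖B‖ * ‖Binv‖))⁻¹ * Real.sqrt (1 - ‖B‖ * β ^ 2))
    (w : lp (fun _ : J => ℝ) 2) (Λ₀ : Finset J)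
    (hwsupp : ∀ i : J, i ∉ Λ₀ → w i = 0)
    (r : lp (fun _ : J => ℝ) 2)
    (hr : ‖r - (B w - f)‖ ≤ ζ * ‖B w - f‖) :
    ∀ Λbar : Finset J,
      (∃ v : lp (fun _ : J => ℝ) 2, (∀ i : J, i ∉ Λbar → v i = 0) ∧
          ‖u - v‖ ≤ β * Real.sqrt ⟪B (u - w), u - w⟫) →
      ω₁ * ‖r‖ ≤ ‖restr (↑(Λ₀ ∪ Λbar)) r‖ ∧
      ((Λ₀ ∪ Λbar) \ Λ₀).card ≤ Λbar.card := by
  rintro Λbar ⟨v, hvsupp, hvu⟩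
  refine ⟨?_, by rw [Finset.union_sdiff_left]; exact Finset.card_le_card Finset.sdiff_subset⟩
  have hB : B.IsPositive := (ContinuousLinearMap.isPositive_iff B).2
    ⟨hsa, fun x => (mul_nonneg hrB.le (sq_nonneg _)).trans (hell x).1⟩
  have hres : B (w - u) = B w - f := by rw [map_sub, hu]
  have henergy : ⟪B (u - v), u - v⟫ ≤ ‖B‖ * β ^ 2 * ⟪B (w - u), w - u⟫ := by
    rw [← neg_sub w u, map_neg, inner_neg_neg] at hvu
    calc ⟪B (u - v), u - v⟫ ≤ ‖B‖ * ‖u - v‖ ^ 2 := B.real_inner_apply_self_le _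
      _ ≤ ‖B‖ * (β * √⟪B (w - u), w - u⟫) ^ 2 := by gcongr
      _ = ‖B‖ * β ^ 2 * ⟪B (w - u), w - u⟫ := by
        rw [mul_pow, Real.sq_sqrt (hB.inner_nonneg_left _)]; ring
  have hsupp : ∀ i ∉ (↑(Λ₀ ∪ Λbar) : Set J), (w - u + (u - v)) i = 0 := by
    intro i hi
    simp only [Finset.coe_union, Set.mem_union, Finset.mem_coe, not_or] at hi
    simp [hwsupp i hi.1, hvsupp i hi.2]
  have hdual : |⟪B (w - u), w - u + (u - v)⟫| ≤
      ‖restr (↑(Λ₀ ∪ Λbar)) (B w - f)‖ * ‖w - u + (u - v)‖ := by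
    rw [hres, ← inner_restr_of_support_subset _ hsupp]
    exact abs_real_inner_le_norm _ _
  have hbulk := hB.one_sub_mul_norm_apply_sq_le (DFunLike.congr_fun hinv2)
    (mul_sq_lt_one_of_lt_inv_sqrt (norm_nonneg B) hβ0.le hβ) henergy hdual
  rw [hres] at hbulk
  exact mul_norm_le_norm_restr_of_norm_sub_le hζ hω₁0.le hωhat
    (inv_sqrt_mul_sqrt_mul_le (by positivity) (norm_nonneg _) (norm_nonneg _) hbulk) hr

/-- **Cardinality bound for inexact bulk chasing.**  With `B` bounded, self-adjoint
and elliptic on `H = ℓ²(𝒥)`, boundedly invertible with inverse `Binv`,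
`κ(B) = ‖B‖·‖B⁻¹‖`, and `u = B⁻¹f`: let `ζ ∈ [0,1/2)`, `ω₁ ∈ (0,1)` and
`β ∈ (0, ‖B‖^{−1/2})` with `ω̂ = (ω₁(1−ζ)+ζ)/(1−2ζ) ≤ κ(B)^{−1/2}(1 − ‖B‖β²)^{1/2}`.
Let `w ∈ H`, `Λ₀` finite with `supp w ⊆ Λ₀`, and `r` with `‖r − (Bw − f)‖ ≤ ζ‖Bw − f‖`.
Then for every finite `Λ̄` admitting `v` with `supp v ⊆ Λ̄` and `‖u − v‖ ≤ β‖u − w‖_B`,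
the set `Λ̂ = Λ₀ ∪ Λ̄` satisfies `‖r|_{Λ̂}‖ ≥ ω₁‖r‖` and `#(Λ̂ \ Λ₀) ≤ #Λ̄`. -/
theorem stmt_18 {J : Type*} [Countable J] [DecidableEq J]
    (B Binv : lp (fun _ : J => ℝ) 2 →L[ℝ] lp (fun _ : J => ℝ) 2)
    (rB RB : ℝ) (hrB : 0 < rB) (hrRB : rB ≤ RB)
    (hsa : ∀ x y, ⟪B x, y⟫ = ⟪x, B y⟫)
    (hell : ∀ v, rB * ‖v‖ ^ 2 ≤ ⟪B v, v⟫ ∧ ⟪B v, v⟫ ≤ RB * ‖v‖ ^ 2)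
    (hinv1 : Binv.comp B = ContinuousLinearMap.id ℝ _)
    (hinv2 : B.comp Binv = ContinuousLinearMap.id ℝ _)
    (f u : lp (fun _ : J => ℝ) 2) (hu : B u = f)
    (ζ ω₁ β : ℝ) (hζ0 : 0 ≤ ζ) (hζ : ζ < 1 / 2)
    (hω₁0 : 0 < ω₁) (hω₁1 : ω₁ < 1)
    (hβ0 : 0 < β) (hβ : β < (Real.sqrt ‖B‖)⁻¹)
    (hωhat : (ω₁ * (1 - ζ) + ζ) / (1 - 2 * ζ) ≤
      (Real.sqrt (‖B‖ * ‖Binv‖))⁻¹ * Real.sqrt (1 - ‖B‖ * β ^ 2))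
    (w : lp (fun _ : J => ℝ) 2) (Λ₀ : Finset J)
    (hwsupp : ∀ i : J, i ∉ Λ₀ → w i = 0)
    (r : lp (fun _ : J => ℝ) 2)
    (hr : ‖r - (B w - f)‖ ≤ ζ * ‖B w - f‖) :
    ∀ Λbar : Finset J,
      (∃ v : lp (fun _ : J => ℝ) 2, (∀ i : J, i ∉ Λbar → v i = 0) ∧
          ‖u - v‖ ≤ β * Real.sqrt ⟪B (u - w), u - w⟫) →
      ω₁ * ‖r‖ ≤ ‖restr (↑(Λ₀ ∪ Λbar)) r‖ ∧
      ((Λ₀ ∪ Λbar) \ Λ₀).card ≤ Λbar.card :=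
  stmt_18_general B Binv rB RB hrB hsa hell hinv2 f u hu ζ ω₁ β hζ hω₁0 hβ0 hβ hωhat w Λ₀ hwsupp r
    hr
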